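/- Let u₀ : [0,L] → [0,∞) be bounded and measurable, and let ε ∈ (0, L/2) be such that ∫_ε^{L−ε} u₀(y) dy > 0. Then there exist t₀ > 0 and c > 0 such that (G_D u₀)(t,x) ≥ c·exp(−μ₁ t) for all t ≥ t₀ and all x ∈ [ε, L−ε], where μ₁ := π²/(2L²). -/

import Mathlib

/-!
Expanding the kernel in Dirichlet modes, the first mode contributes
`(2/L) e^{-μ₁ t} sin(πx/L) ∫₀^L sin(πy/L) u₀(y) dy`, and on `[ε, L-ε]` both sine factors are at
least `sin(πε/L)`, so this is `≥ (2/L) e^{-μ₁ t} sin(πε/L)² ∫_ε^{L-ε} u₀`. The higher modes are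
bounded by `(2/L) ∑_{n ≥ 2} e^{-n² μ₁ t} ∫₀^L u₀`, which is `O(e^{-4 μ₁ t}) = o(e^{-μ₁ t})`.
-/

open MeasureTheory Real Filter Topology

/-- The Dirichlet heat kernel on `(0,L)`. -/
noncomputable def dirichletKernel (L t x y : ℝ) : ℝ :=
  (2 / L) * ∑' n : ℕ,
    Real.exp (-((n:ℝ)+1)^2 * Real.pi^2 * t / (2*L^2)) *
      Real.sin (((n:ℝ)+1) * Real.pi * x / L) * Real.sin (((n:ℝ)+1) * Real.pi * y / L)

/-- The Dirichlet semigroup applied to the initial data: `(G_D u₀)(t,x) = ∫₀^L p_D(t,x,y) u₀(y) dy`. -/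
noncomputable def GD (L : ℝ) (u₀ : ℝ → ℝ) (t x : ℝ) : ℝ :=
  ∫ y in (0:ℝ)..L, dirichletKernel L t x y * u₀ y

lemma Real.sin_le_sin_of_le_of_le_pi_sub {a θ : ℝ} (ha : 0 ≤ a) (h₁ : a ≤ θ) (h₂ : θ ≤ π - a) :
    sin a ≤ sin θ := by
  rcases le_or_gt θ (π / 2) with h | h
  · exact sin_le_sin_of_le_of_le_pi_div_two (by linarith [pi_pos]) h h₁
  · rw [← sin_pi_sub θ]
    exact sin_le_sin_of_le_of_le_pi_div_two (by linarith [pi_pos]) (by linarith) (by linarith)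

lemma sin_pi_mul_div_le_of_mem_Icc {L ε x : ℝ} (hL : 0 < L) (hε : 0 ≤ ε)
    (hx : x ∈ Set.Icc ε (L - ε)) : sin (π * ε / L) ≤ sin (π * x / L) := by
  apply Real.sin_le_sin_of_le_of_le_pi_sub (by positivity)
  · gcongr; exact hx.1
  · rw [le_sub_iff_add_le, ← add_div, div_le_iff₀ hL]
    nlinarith [hx.2, pi_pos]

lemma sin_pi_mul_div_nonneg {L y : ℝ} (hL : 0 < L) (hy : y ∈ Set.Icc 0 L) :
    0 ≤ sin (π * y / L) := by
  apply sin_nonneg_of_nonneg_of_le_pi (div_nonneg (mul_nonneg pi_pos.le hy.1) hL.le)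
  rw [div_le_iff₀ hL]
  nlinarith [hy.2, pi_pos]

lemma summable_exp_neg_add_sq_mul {q a : ℝ} (hq : 0 < q) (ha : 0 ≤ a) :
    Summable fun n : ℕ => exp (-((n : ℝ) + a) ^ 2 * q) := by
  have hge (n : ℕ) : (n : ℝ) ≤ ((n : ℝ) + a) ^ 2 := by
    have : (n : ℝ) ≤ (n : ℝ) ^ 2 := by exact_mod_cast Nat.le_self_pow two_ne_zero n
    nlinarith
  refine (summable_exp_nat_mul_of_ge (neg_lt_zero.2 hq) hge).congr fun n => ?_
  ring_nf

/-- With `q = μ₁ t`, this bounds the modes `n ≥ 2` of the Dirichlet heat kernel. -/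
noncomputable def dirichletTail (q : ℝ) : ℝ := ∑' n : ℕ, exp (-((n : ℝ) + 2) ^ 2 * q)

lemma exp_mul_dirichletTail_le {q : ℝ} (hq : 1 ≤ q) :
    exp q * dirichletTail q ≤ (∑' n : ℕ, exp (-((n : ℝ) + 1) ^ 2)) * exp (-(2 * q)) := by
  have hsum : Summable fun n : ℕ => exp (-((n : ℝ) + 1) ^ 2) := by
    simpa using summable_exp_neg_add_sq_mul one_pos zero_le_one
  have hterm (n : ℕ) :
      exp (-((n : ℝ) + 2) ^ 2 * q) ≤ exp (-(3 * q)) * exp (-((n : ℝ) + 1) ^ 2) := by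
    rw [← exp_add]
    exact exp_le_exp.2 (by nlinarith [(n.cast_nonneg : (0 : ℝ) ≤ n)])
  have htail : dirichletTail q ≤ exp (-(3 * q)) * ∑' n : ℕ, exp (-((n : ℝ) + 1) ^ 2) := by
    rw [dirichletTail, ← tsum_mul_left]
    exact (summable_exp_neg_add_sq_mul (by linarith) zero_le_two).tsum_le_tsum hterm
      (hsum.mul_left _)
  calc exp q * dirichletTail q
      ≤ exp q * (exp (-(3 * q)) * ∑' n : ℕ, exp (-((n : ℝ) + 1) ^ 2)) :=
        mul_le_mul_of_nonneg_left htail (exp_pos q).le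
    _ = _ := by rw [← mul_assoc, ← exp_add]; ring_nf

lemma tendsto_exp_mul_dirichletTail_atTop :
    Tendsto (fun q => exp q * dirichletTail q) atTop (𝓝 0) := by
  have hdecay : Tendsto (fun q : ℝ => (∑' n : ℕ, exp (-((n : ℝ) + 1) ^ 2)) * exp (-(2 * q)))
      atTop (𝓝 0) := by
    simpa using (tendsto_exp_neg_atTop_nhds_zero.comp
      (tendsto_id.const_mul_atTop two_pos)).const_mul (∑' n : ℕ, exp (-((n : ℝ) + 1) ^ 2))
  refine squeeze_zero' (Eventually.of_forall fun q => ?_) ?_ hdecay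
  · exact mul_nonneg (exp_pos q).le (tsum_nonneg fun n => (exp_pos _).le)
  · filter_upwards [eventually_ge_atTop 1] with q hq using exp_mul_dirichletTail_le hq

noncomputable def dirichletTerm (L t x y : ℝ) (n : ℕ) : ℝ :=
  exp (-((n:ℝ)+1)^2 * π^2 * t / (2*L^2)) *
    sin (((n:ℝ)+1) * π * x / L) * sin (((n:ℝ)+1) * π * y / L)

lemma dirichletKernel_eq_tsum (L t x y : ℝ) :
    dirichletKernel L t x y = (2 / L) * ∑' n, dirichletTerm L t x y n := rfl

lemma norm_dirichletTerm_le (L t x y : ℝ) (n : ℕ) :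
    ‖dirichletTerm L t x y n‖ ≤ exp (-((n : ℝ) + 1) ^ 2 * (π ^ 2 / (2 * L ^ 2) * t)) := by
  rw [dirichletTerm, norm_mul, norm_mul, norm_of_nonneg (exp_pos _).le, Real.norm_eq_abs,
    Real.norm_eq_abs]
  have hexp : -((n:ℝ)+1)^2 * π^2 * t / (2*L^2) =
      -((n : ℝ) + 1) ^ 2 * (π ^ 2 / (2 * L ^ 2) * t) := by
    ring
  rw [hexp]
  calc _ ≤ exp (-((n : ℝ) + 1) ^ 2 * (π ^ 2 / (2 * L ^ 2) * t)) * 1 * 1 := by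
        gcongr <;> exact abs_sin_le_one _
    _ = _ := by ring

lemma continuous_dirichletKernel {L t : ℝ} (hL : 0 < L) (ht : 0 < t) (x : ℝ) :
    Continuous (dirichletKernel L t x) := by
  have hterm (n : ℕ) : Continuous fun y => dirichletTerm L t x y n := by
    unfold dirichletTerm; fun_prop
  exact continuous_const.mul <| continuous_tsum hterm
    (summable_exp_neg_add_sq_mul (by positivity) zero_le_one)
    fun n y => norm_dirichletTerm_le L t x y n

lemma abs_dirichletKernel_sub_first_mode_le {L t : ℝ} (hL : 0 < L) (ht : 0 < t) (x y : ℝ) :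
    |dirichletKernel L t x y -
        (2 / L) * (exp (-(π ^ 2 / (2 * L ^ 2)) * t) * sin (π * x / L) * sin (π * y / L))| ≤
      (2 / L) * dirichletTail (π ^ 2 / (2 * L ^ 2) * t) := by
  have hsum : Summable fun n => dirichletTerm L t x y n :=
    (summable_exp_neg_add_sq_mul (by positivity) zero_le_one).of_norm_bounded
      (norm_dirichletTerm_le L t x y)
  have hfirst : dirichletTerm L t x y 0 =
      exp (-(π ^ 2 / (2 * L ^ 2)) * t) * sin (π * x / L) * sin (π * y / L) := by
    simp only [dirichletTerm, Nat.cast_zero, zero_add, one_pow, one_mul]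
    ring_nf
  have htail : ‖∑' n, dirichletTerm L t x y (n + 1)‖ ≤ dirichletTail (π ^ 2 / (2 * L ^ 2) * t) := by
    refine tsum_of_norm_bounded (summable_exp_neg_add_sq_mul (by positivity) zero_le_two).hasSum
      fun n => (norm_dirichletTerm_le L t x y (n + 1)).trans_eq ?_
    push_cast; ring_nf
  rw [dirichletKernel_eq_tsum, hsum.tsum_eq_zero_add, hfirst, ← mul_sub, add_sub_cancel_left,
    abs_mul, abs_of_pos (by positivity)]
  exact mul_le_mul_of_nonneg_left htail (by positivity)

lemma GD_ge_first_mode_sub_tail {L t : ℝ} (hL : 0 < L) (ht : 0 < t) {u₀ : ℝ → ℝ}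
    (hu₀ : IntervalIntegrable u₀ volume 0 L) (hnonneg : ∀ y ∈ Set.Icc (0:ℝ) L, 0 ≤ u₀ y) (x : ℝ) :
    (2 / L) * (exp (-(π ^ 2 / (2 * L ^ 2)) * t) * sin (π * x / L) *
          (∫ y in (0:ℝ)..L, sin (π * y / L) * u₀ y) -
        dirichletTail (π ^ 2 / (2 * L ^ 2) * t) * ∫ y in (0:ℝ)..L, u₀ y) ≤ GD L u₀ t x := by
  set a := exp (-(π ^ 2 / (2 * L ^ 2)) * t) * sin (π * x / L)
  set S := dirichletTail (π ^ 2 / (2 * L ^ 2) * t)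
  have hsin_int : IntervalIntegrable (fun y => sin (π * y / L) * u₀ y) volume 0 L :=
    hu₀.continuousOn_mul (by fun_prop)
  have hlower : ∀ y ∈ Set.Icc (0:ℝ) L,
      (2 / L * a) * (sin (π * y / L) * u₀ y) - (2 / L * S) * u₀ y ≤
        dirichletKernel L t x y * u₀ y := by
    intro y hy
    have hk := (abs_le.1 (abs_dirichletKernel_sub_first_mode_le hL ht x y)).1
    nlinarith [hnonneg y hy]
  calc _ = ∫ y in (0:ℝ)..L, (2 / L * a) * (sin (π * y / L) * u₀ y) - (2 / L * S) * u₀ y := by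
        rw [intervalIntegral.integral_sub (hsin_int.const_mul _) (hu₀.const_mul _),
          intervalIntegral.integral_const_mul, intervalIntegral.integral_const_mul]
        ring
    _ ≤ GD L u₀ t x :=
      intervalIntegral.integral_mono_on hL.le ((hsin_int.const_mul _).sub (hu₀.const_mul _))
        (hu₀.continuousOn_mul (continuous_dirichletKernel hL ht x).continuousOn) hlower

lemma integral_sin_pi_mul_div_mul_ge {L ε : ℝ} (hL : 0 < L) (hε : 0 ≤ ε) (hεL : ε ≤ L - ε)
    {u₀ : ℝ → ℝ} (hu₀ : IntervalIntegrable u₀ volume 0 L)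
    (hnonneg : ∀ y ∈ Set.Icc (0:ℝ) L, 0 ≤ u₀ y) :
    sin (π * ε / L) * ∫ y in ε..(L - ε), u₀ y ≤ ∫ y in (0:ℝ)..L, sin (π * y / L) * u₀ y := by
  have hsin_int : IntervalIntegrable (fun y => sin (π * y / L) * u₀ y) volume 0 L :=
    hu₀.continuousOn_mul (by fun_prop)
  have hsub : Set.uIcc ε (L - ε) ⊆ Set.uIcc 0 L := by
    rw [Set.uIcc_of_le hεL, Set.uIcc_of_le hL.le]
    exact Set.Icc_subset_Icc hε (by linarith)
  rw [← intervalIntegral.integral_const_mul]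
  calc _ ≤ ∫ y in ε..(L - ε), sin (π * y / L) * u₀ y := by
        refine intervalIntegral.integral_mono_on hεL ((hu₀.mono_set hsub).const_mul _)
          (hsin_int.mono_set hsub) fun y hy => ?_
        exact mul_le_mul_of_nonneg_right (sin_pi_mul_div_le_of_mem_Icc hL hε hy)
          (hnonneg y ⟨by linarith [hy.1], by linarith [hy.2]⟩)
    _ ≤ _ := by
      refine intervalIntegral.integral_mono_interval hε hεL (by linarith) ?_ hsin_int
      filter_upwards [ae_restrict_mem measurableSet_Ioc] with y hy
      exact mul_nonneg (sin_pi_mul_div_nonneg hL (Set.Ioc_subset_Icc_self hy))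
        (hnonneg y (Set.Ioc_subset_Icc_self hy))

lemma intervalIntegrable_of_nonneg_of_le {u : ℝ → ℝ} {a b M : ℝ} (hab : a ≤ b)
    (hmeas : Measurable u) (hnonneg : ∀ y ∈ Set.Icc a b, 0 ≤ u y)
    (hle : ∀ y ∈ Set.Icc a b, u y ≤ M) : IntervalIntegrable u volume a b := by
  rw [intervalIntegrable_iff_integrableOn_Icc_of_le hab]
  refine Measure.integrableOn_of_bounded (M := M) measure_Icc_lt_top.ne
    hmeas.aestronglyMeasurable ?_
  filter_upwards [ae_restrict_mem measurableSet_Icc] with y hy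
  rw [Real.norm_of_nonneg (hnonneg y hy)]
  exact hle y hy

lemma GD_ge_of_exp_mul_dirichletTail_le {L t ε x : ℝ} (hL : 0 < L) (ht : 0 < t) {u₀ : ℝ → ℝ}
    (hu₀ : IntervalIntegrable u₀ volume 0 L) (hnonneg : ∀ y ∈ Set.Icc (0:ℝ) L, 0 ≤ u₀ y)
    (hε : 0 ≤ ε) (hx : x ∈ Set.Icc ε (L - ε))
    (hsmall : exp (π ^ 2 / (2 * L ^ 2) * t) * dirichletTail (π ^ 2 / (2 * L ^ 2) * t) *
        ∫ y in (0:ℝ)..L, u₀ y ≤ sin (π * ε / L) ^ 2 * (∫ y in ε..(L - ε), u₀ y) / 2) :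
    sin (π * ε / L) ^ 2 * (∫ y in ε..(L - ε), u₀ y) / L * exp (-(π ^ 2 / (2 * L ^ 2)) * t) ≤
      GD L u₀ t x := by
  set μ := π ^ 2 / (2 * L ^ 2)
  set s := sin (π * ε / L)
  set K := s ^ 2 * ∫ y in ε..(L - ε), u₀ y with hK
  have hsx := sin_pi_mul_div_le_of_mem_Icc hL hε hx
  have hs : 0 ≤ s := sin_pi_mul_div_nonneg hL ⟨hε, by linarith [hx.1, hx.2]⟩
  have hA := integral_sin_pi_mul_div_mul_ge hL hε (hx.1.trans hx.2) hu₀ hnonneg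
  have hmode : K ≤ sin (π * x / L) * ∫ y in (0:ℝ)..L, sin (π * y / L) * u₀ y := by
    rw [hK, sq, mul_assoc]
    exact mul_le_mul hsx hA (mul_nonneg hs (intervalIntegral.integral_nonneg
      (hx.1.trans hx.2) fun y hy => hnonneg y ⟨by linarith [hy.1], by linarith [hy.2]⟩))
      (hs.trans hsx)
  have htail : dirichletTail (μ * t) * ∫ y in (0:ℝ)..L, u₀ y ≤ exp (-μ * t) * (K / 2) :=
    calc dirichletTail (μ * t) * ∫ y in (0:ℝ)..L, u₀ y
        = exp (-μ * t) * (exp (μ * t) * dirichletTail (μ * t) * ∫ y in (0:ℝ)..L, u₀ y) := by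
          rw [neg_mul, exp_neg]; field_simp
      _ ≤ exp (-μ * t) * (K / 2) := by gcongr
  calc K / L * exp (-μ * t) = (2 / L) * (exp (-μ * t) * K - exp (-μ * t) * (K / 2)) := by ring
    _ ≤ (2 / L) * (exp (-μ * t) * sin (π * x / L) * (∫ y in (0:ℝ)..L, sin (π * y / L) * u₀ y) -
          dirichletTail (μ * t) * ∫ y in (0:ℝ)..L, u₀ y) := by
        have := mul_le_mul_of_nonneg_left hmode (exp_pos (-μ * t)).le
        exact mul_le_mul_of_nonneg_left (by linarith) (by positivity)
    _ ≤ GD L u₀ t x := GD_ge_first_mode_sub_tail hL ht hu₀ hnonneg x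

/-- If `u₀ : [0,L] → [0,∞)` is bounded measurable and `∫_ε^{L-ε} u₀ > 0` for some
`ε ∈ (0,L/2)`, then there are `t₀ > 0` and `c > 0` such that
`(G_D u₀)(t,x) ≥ c exp(-μ₁ t)` for all `t ≥ t₀` and `x ∈ [ε, L-ε]`, with `μ₁ = π²/(2L²)`. -/
theorem GD_lower_exp (L : ℝ) (hL : 0 < L) (u₀ : ℝ → ℝ)
    (hmeas : Measurable u₀) (hnonneg : ∀ y ∈ Set.Icc (0:ℝ) L, 0 ≤ u₀ y)
    (hbdd : ∃ M : ℝ, ∀ y ∈ Set.Icc (0:ℝ) L, u₀ y ≤ M)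
    (ε : ℝ) (hε : ε ∈ Set.Ioo (0:ℝ) (L/2))
    (hpos : 0 < ∫ y in ε..(L - ε), u₀ y) :
    ∃ t₀ > (0:ℝ), ∃ c > (0:ℝ), ∀ t ≥ t₀, ∀ x ∈ Set.Icc ε (L - ε),
      c * Real.exp (-(Real.pi^2 / (2*L^2)) * t) ≤ GD L u₀ t x := by
  obtain ⟨M, hM⟩ := hbdd
  obtain ⟨hε₀, hεL⟩ := hε
  have hu₀ := intervalIntegrable_of_nonneg_of_le hL.le hmeas hnonneg hM
  have hμ : 0 < π ^ 2 / (2 * L ^ 2) := by positivity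
  have hs : 0 < sin (π * ε / L) :=
    sin_pos_of_pos_of_lt_pi (by positivity) (by rw [div_lt_iff₀ hL]; nlinarith [pi_pos])
  have hsmall : ∀ᶠ t in atTop, exp (π ^ 2 / (2 * L ^ 2) * t) *
      dirichletTail (π ^ 2 / (2 * L ^ 2) * t) * ∫ y in (0:ℝ)..L, u₀ y <
        sin (π * ε / L) ^ 2 * (∫ y in ε..(L - ε), u₀ y) / 2 :=
    ((tendsto_exp_mul_dirichletTail_atTop.comp (tendsto_id.const_mul_atTop hμ)).mul_const
      _).eventually_lt_const (by rw [zero_mul]; positivity)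
  obtain ⟨T, hT⟩ := eventually_atTop.1 hsmall
  refine ⟨max T 1, by positivity, _, by positivity, fun t ht x hx =>
    GD_ge_of_exp_mul_dirichletTail_le hL (one_pos.trans_le (le_of_max_le_right ht)) hu₀ hnonneg
      hε₀.le hx (hT t (le_of_max_le_left ht)).le⟩
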